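/- arXiv:2503.22887 — 4 statements merged into one kernel-verified Lean document; each statement's English description precedes it below -/
import Mathlib

section
/- For two univariate matrix polynomials A(λ) = [[λ−1, 0],[1, λ−1]] and B(λ) = [[λ, 1],[0, λ−2]] over ℂ, the matrix (A(s)B(t) − A(t)B(s))/(s−t) is the constant matrix [[1,1],[−1,−1]], which is singular, even though A and B have no common eigenvalue (i.e., there is no λ ∈ ℂ with det A(λ) = 0 and det B(λ) = 0). -/
open Matrix

/-- For A(λ) = [[λ−1,0],[1,λ−1]] and B(λ) = [[λ,1],[0,λ−2]] over ℂ, the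
quotient (A(s)B(t) − A(t)B(s))/(s−t) exists and is the constant matrix [[1,1],[−1,−1]],
which is singular, even though A and B have no common eigenvalue. -/
theorem stmt_0
    (A B : ℂ → Matrix (Fin 2) (Fin 2) ℂ)
    (hA : ∀ l : ℂ, A l = !![l - 1, 0; 1, l - 1])
    (hB : ∀ l : ℂ, B l = !![l, 1; 0, l - 2]) :
    (∀ s t : ℂ, A s * B t - A t * B s =
        (s - t) • (!![1, 1; -1, -1] : Matrix (Fin 2) (Fin 2) ℂ)) ∧
    (!![1, 1; -1, -1] : Matrix (Fin 2) (Fin 2) ℂ).det = 0 ∧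
    ¬ ∃ l : ℂ, (A l).det = 0 ∧ (B l).det = 0 := by
  refine ⟨fun s t => ?_, by simp [Matrix.det_fin_two_of], ?_⟩
  · simp only [hA, hB]
    ext i j
    fin_cases i <;> fin_cases j <;>
      simp [Matrix.mul_apply, Fin.sum_univ_two] <;> ring
  · rintro ⟨l, h1, h2⟩
    rw [hA l, hB l] at *
    simp [Matrix.det_fin_two_of] at h1 h2
    rcases h2 with h2 | h2
    · rw [h2] at h1; norm_num at h1
    · rw [sub_eq_zero] at h2; rw [h2] at h1; norm_num at h1
end

section
/- Let A and B be univariate matrix polynomials with a common eigenvalue λ* and eigenvectors u, v (A(λ*)u = 0, B(λ*)v = 0, u ⊗ v ≠ 0). Write A(s)⊗B(t) − A(t)⊗B(s) = (s − t) · F(s,t) where F is a matrix of bivariate polynomials. Then for all t ∈ ℂ, F(λ*, t) (u ⊗ v) = 0; in particular each matrix coefficient F_j of the expansion F(s,t) = Σ_j F_j(s) t^j satisfies F_j(λ*)(u⊗v) = 0. -/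
open Matrix Kronecker MvPolynomial

/-- Let A, B be univariate matrix polynomials with a common eigenvalue λ*
and eigenvectors u, v (A(λ*)u = 0, B(λ*)v = 0, u ⊗ v ≠ 0).  Write
A(s)⊗B(t) − A(t)⊗B(s) = (s − t) · F(s,t) with F a matrix of bivariate polynomials
(s = X 0, t = X 1).  Then for all t ∈ ℂ, F(λ*, t)(u ⊗ v) = 0. -/
theorem stmt_4 (m n : ℕ)
    (A : Matrix (Fin m) (Fin m) (Polynomial ℂ)) (B : Matrix (Fin n) (Fin n) (Polynomial ℂ))
    (F : Matrix (Fin m × Fin n) (Fin m × Fin n) (MvPolynomial (Fin 2) ℂ))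
    (hF : (A.map fun p => Polynomial.aeval (X 0 : MvPolynomial (Fin 2) ℂ) p) ⊗ₖ
          (B.map fun p => Polynomial.aeval (X 1 : MvPolynomial (Fin 2) ℂ) p) -
          (A.map fun p => Polynomial.aeval (X 1 : MvPolynomial (Fin 2) ℂ) p) ⊗ₖ
          (B.map fun p => Polynomial.aeval (X 0 : MvPolynomial (Fin 2) ℂ) p) =
          (X 0 - X 1 : MvPolynomial (Fin 2) ℂ) • F)
    (lam : ℂ) (u : Fin m → ℂ) (v : Fin n → ℂ)
    (huv : (fun p : Fin m × Fin n => u p.1 * v p.2) ≠ 0)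
    (hAu : (A.map (Polynomial.eval lam)) *ᵥ u = 0)
    (hBv : (B.map (Polynomial.eval lam)) *ᵥ v = 0) :
    ∀ t : ℂ, (F.map (MvPolynomial.eval ![lam, t])) *ᵥ (fun p => u p.1 * v p.2) = 0 := by
  set uv : Fin m × Fin n → ℂ := fun p => u p.1 * v p.2 with huvdef
  have haux : ∀ (t : ℂ) (a : Polynomial ℂ) (i : Fin 2),
      MvPolynomial.eval ![lam, t] (Polynomial.aeval (X i : MvPolynomial (Fin 2) ℂ) a)
        = Polynomial.eval (![lam, t] i) a := by
    intro t a i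
    induction a using Polynomial.induction_on with
    | C c => simp
    | add p q hp hq => simp [hp, hq]
    | monomial k c h => simp_all [pow_succ, mul_assoc]
  have key : ∀ t : ℂ, ∀ p : Fin m × Fin n,
      (lam - t) * ((F.map (MvPolynomial.eval ![lam, t])) *ᵥ uv) p = 0 := by
    intro t p
    have hentry : ∀ q, MvPolynomial.eval ![lam, t]
        (((A.map fun a => Polynomial.aeval (X 0 : MvPolynomial (Fin 2) ℂ) a) ⊗ₖ
          (B.map fun a => Polynomial.aeval (X 1 : MvPolynomial (Fin 2) ℂ) a) -
          (A.map fun a => Polynomial.aeval (X 1 : MvPolynomial (Fin 2) ℂ) a) ⊗ₖ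
          (B.map fun a => Polynomial.aeval (X 0 : MvPolynomial (Fin 2) ℂ) a)) p q)
        = MvPolynomial.eval ![lam, t] (((X 0 - X 1 : MvPolynomial (Fin 2) ℂ) • F) p q) := by
      intro q; rw [hF]
    have hAl : ∀ i : Fin m, ∑ j, Polynomial.eval lam (A i j) * u j = 0 := by
      intro i
      have := congrFun hAu i
      simpa [Matrix.mulVec, dotProduct, Matrix.map_apply] using this
    have hBl : ∀ i : Fin n, ∑ j, Polynomial.eval lam (B i j) * v j = 0 := by
      intro i
      have := congrFun hBv i
      simpa [Matrix.mulVec, dotProduct, Matrix.map_apply] using this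
    have expand : (lam - t) * ((F.map (MvPolynomial.eval ![lam, t])) *ᵥ uv) p
        = ∑ q, MvPolynomial.eval ![lam, t]
            (((X 0 - X 1 : MvPolynomial (Fin 2) ℂ) • F) p q) * uv q := by
      simp [Matrix.mulVec, dotProduct, Matrix.map_apply, Matrix.smul_apply, smul_eq_mul,
        Finset.mul_sum, mul_assoc]
    rw [expand]
    have expand2 : ∀ q, MvPolynomial.eval ![lam, t]
        (((X 0 - X 1 : MvPolynomial (Fin 2) ℂ) • F) p q) * uv q
        = (Polynomial.eval lam (A p.1 q.1) * Polynomial.eval t (B p.2 q.2)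
            - Polynomial.eval t (A p.1 q.1) * Polynomial.eval lam (B p.2 q.2))
          * (u q.1 * v q.2) := by
      intro q
      rw [← hentry q]
      simp [Matrix.sub_apply, Matrix.kroneckerMap_apply, Matrix.map_apply, haux, uv]
    simp only [expand2]
    rw [Fintype.sum_prod_type]
    have : ∀ q1 : Fin m, ∑ q2 : Fin n,
        (Polynomial.eval lam (A p.1 q1) * Polynomial.eval t (B p.2 q2)
          - Polynomial.eval t (A p.1 q1) * Polynomial.eval lam (B p.2 q2)) * (u q1 * v q2)
        = (Polynomial.eval lam (A p.1 q1) * u q1) * (∑ q2, Polynomial.eval t (B p.2 q2) * v q2)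
          - (Polynomial.eval t (A p.1 q1) * u q1) * (∑ q2, Polynomial.eval lam (B p.2 q2) * v q2) := by
      intro q1
      rw [Finset.mul_sum, Finset.mul_sum, ← Finset.sum_sub_distrib]
      exact Finset.sum_congr rfl fun q2 _ => by ring
    simp only [this]
    rw [Finset.sum_sub_distrib, ← Finset.sum_mul, ← Finset.sum_mul, hAl, hBl]
    ring
  -- now the polynomial argument per entry
  intro t
  funext p
  -- define the univariate polynomial in the second variable
  set c : MvPolynomial (Fin 2) ℂ := ∑ q, F p q * MvPolynomial.C (uv q) with hc
  set P : Polynomial ℂ :=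
    MvPolynomial.aeval ![Polynomial.C lam, Polynomial.X] c with hP
  have hPe : ∀ s : ℂ, Polynomial.eval s P
      = ((F.map (MvPolynomial.eval ![lam, s])) *ᵥ uv) p := by
    intro s
    have hXi : ∀ i : Fin 2, Polynomial.eval s ((![Polynomial.C lam, Polynomial.X] : Fin 2 → Polynomial ℂ) i) = ![lam, s] i := by
      intro i; fin_cases i <;> simp
    have heach : ∀ q : Fin m × Fin n,
        Polynomial.eval s (MvPolynomial.aeval ![Polynomial.C lam, Polynomial.X] (F p q))
          = MvPolynomial.eval ![lam, s] (F p q) := by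
      intro q
      induction (F p q) using MvPolynomial.induction_on with
      | C a => simp
      | add f g hf hg => simp [hf, hg]
      | mul_X f i hf => simp [hf, hXi i]
    simp [hP, hc, map_sum, Polynomial.eval_finset_sum, Matrix.mulVec, dotProduct,
      Matrix.map_apply, heach]
  have hzero : (Polynomial.C lam - Polynomial.X) * P = 0 := by
    apply Polynomial.funext
    intro s
    simp only [Polynomial.eval_mul, Polynomial.eval_sub, Polynomial.eval_C, Polynomial.eval_X,
      Polynomial.eval_zero, hPe s]
    exact key s p
  have hfac : (Polynomial.C lam - Polynomial.X : Polynomial ℂ) ≠ 0 := by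
    intro h
    have := Polynomial.X_sub_C_ne_zero lam (R := ℂ)
    apply this
    have : (Polynomial.X - Polynomial.C lam : Polynomial ℂ) = -(Polynomial.C lam - Polynomial.X) := by ring
    rw [this, h, neg_zero]
  have hP0 : P = 0 := by
    rcases mul_eq_zero.mp hzero with h | h
    · exact absurd h hfac
    · exact h
  have := hPe t
  rw [hP0] at this
  simp at this
  simp [Pi.zero_apply]
  exact this.symm
end

section
/- If (x*, y*) ∈ ℂ² satisfies det P₁(x*, y*) = 0 and det P₂(x*, y*) = 0 for P₁(x,y) = [[1,0],[0,1]]x² + [[0,1],[2,0]] and P₂(x,y) = [[0,1],[−1,0]]xy + [[−1,0],[−1,1]], then y* is an eigenvalue of the 8×8 linear matrix pencil R(y) = R₁ y + R₀ given by the tensor Dixon resultant of (P₁, P₂), with eigenvector [v; x* v] where v = v₁ ⊗ v₂ for eigenvectors v₁ of P₁(x*,y*) and v₂ of P₂(x*,y*). -/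
open Matrix

/-- The linear coefficient R₁ of the 8×8 tensor Dixon resultant pencil R(y) = R₁y + R₀
of the running example. -/
noncomputable def Rone : Matrix (Fin 8) (Fin 8) ℂ :=
  !![0, 0, 0, -1, 0, 0, 0, 0;
     0, 0, 1, 0, 0, 0, 0, 0;
     0, -2, 0, 0, 0, 0, 0, 0;
     2, 0, 0, 0, 0, 0, 0, 0;
     0, 0, 0, 0, 0, 1, 0, 0;
     0, 0, 0, 0, -1, 0, 0, 0;
     0, 0, 0, 0, 0, 0, 0, 1;
     0, 0, 0, 0, 0, 0, -1, 0]

/-- The constant coefficient R₀ of the pencil. -/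
noncomputable def Rzero : Matrix (Fin 8) (Fin 8) ℂ :=
  !![0, 0, 0, 0, -1, 0, 0, 0;
     0, 0, 0, 0, -1, 1, 0, 0;
     0, 0, 0, 0, 0, 0, -1, 0;
     0, 0, 0, 0, 0, 0, -1, 1;
     -1, 0, 0, 0, 0, 0, 0, 0;
     -1, 1, 0, 0, 0, 0, 0, 0;
     0, 0, -1, 0, 0, 0, 0, 0;
     0, 0, -1, 1, 0, 0, 0, 0]

/-- Index map identifying `Fin 2 × (Fin 2 × Fin 2)` (power of x*, Kronecker pair) with
`Fin 8` in block row-major order. -/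
def idx8 (p : Fin 2 × (Fin 2 × Fin 2)) : Fin 8 :=
  ⟨4 * (p.1 : ℕ) + 2 * (p.2.1 : ℕ) + (p.2.2 : ℕ), by
    have := p.1.isLt; have := p.2.1.isLt; have := p.2.2.isLt; omega⟩

/-- If det P₁(x*,y*) = 0 = det P₂(x*,y*) for the running example PMEP, then
y* is an eigenvalue of the 8×8 pencil R(y) = R₁y + R₀, and for any eigenvectors v₁, v₂ of
P₁(x*,y*), P₂(x*,y*), the block vector [v; x*·v] with v = v₁ ⊗ v₂ is a corresponding
eigenvector: R(y*)·[v; x*·v] = 0. -/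
theorem stmt_6
    (P₁ P₂ : ℂ → ℂ → Matrix (Fin 2) (Fin 2) ℂ)
    (hP₁ : ∀ x y : ℂ, P₁ x y = x ^ 2 • (1 : Matrix (Fin 2) (Fin 2) ℂ) + !![0, 1; 2, 0])
    (hP₂ : ∀ x y : ℂ, P₂ x y = (x * y) • !![0, 1; -1, 0] + !![-1, 0; -1, 1])
    (x y : ℂ)
    (hd₁ : (P₁ x y).det = 0) (hd₂ : (P₂ x y).det = 0) :
    (y • Rone + Rzero).det = 0 ∧
    ∀ v₁ v₂ : Fin 2 → ℂ, v₁ ≠ 0 → v₂ ≠ 0 →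
      P₁ x y *ᵥ v₁ = 0 → P₂ x y *ᵥ v₂ = 0 →
      (Matrix.of fun r c : Fin 2 × (Fin 2 × Fin 2) =>
          (y • Rone + Rzero) (idx8 r) (idx8 c)) *ᵥ
        (fun k => x ^ (k.1 : ℕ) * (v₁ k.2.1 * v₂ k.2.2)) = 0 := by
  have key : ∀ v₁ v₂ : Fin 2 → ℂ,
      P₁ x y *ᵥ v₁ = 0 → P₂ x y *ᵥ v₂ = 0 →
      (Matrix.of fun r c : Fin 2 × (Fin 2 × Fin 2) =>
          (y • Rone + Rzero) (idx8 r) (idx8 c)) *ᵥ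
        (fun k => x ^ (k.1 : ℕ) * (v₁ k.2.1 * v₂ k.2.2)) = 0 := by
    intro v₁ v₂ h1 h2
    rw [hP₁] at h1
    rw [hP₂] at h2
    have e10 := congrFun h1 0
    have e11 := congrFun h1 1
    have e20 := congrFun h2 0
    have e21 := congrFun h2 1
    simp [mulVec, dotProduct, Fin.sum_univ_two, Matrix.one_apply] at e10 e11 e20 e21
    funext r
    obtain ⟨p, i, j⟩ := r
    fin_cases p <;> fin_cases i <;> fin_cases j <;>
      simp [mulVec, dotProduct, Fintype.sum_prod_type, Fin.sum_univ_two, idx8,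
        show Rone 0 = ![0,0,0,-1,0,0,0,0] from rfl, show Rone 1 = ![0,0,1,0,0,0,0,0] from rfl,
        show Rone 2 = ![0,-2,0,0,0,0,0,0] from rfl, show Rone 3 = ![2,0,0,0,0,0,0,0] from rfl,
        show Rone 4 = ![0,0,0,0,0,1,0,0] from rfl, show Rone 5 = ![0,0,0,0,-1,0,0,0] from rfl,
        show Rone 6 = ![0,0,0,0,0,0,0,1] from rfl, show Rone 7 = ![0,0,0,0,0,0,-1,0] from rfl,
        show Rzero 0 = ![0,0,0,0,-1,0,0,0] from rfl, show Rzero 1 = ![0,0,0,0,-1,1,0,0] from rfl,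
        show Rzero 2 = ![0,0,0,0,0,0,-1,0] from rfl, show Rzero 3 = ![0,0,0,0,0,0,-1,1] from rfl,
        show Rzero 4 = ![-1,0,0,0,0,0,0,0] from rfl, show Rzero 5 = ![-1,1,0,0,0,0,0,0] from rfl,
        show Rzero 6 = ![0,0,-1,0,0,0,0,0] from rfl, show Rzero 7 = ![0,0,-1,1,0,0,0,0] from rfl]
    · linear_combination (-y * v₂ 1) * e10 + (x * v₁ 0) * e20
    · linear_combination (y * v₂ 0) * e10 + (x * v₁ 0) * e21
    · linear_combination (-y * v₂ 1) * e11 + (x * v₁ 1) * e20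
    · linear_combination (y * v₂ 0) * e11 + (x * v₁ 1) * e21
    · linear_combination v₁ 0 * e20
    · linear_combination v₁ 0 * e21
    · linear_combination v₁ 1 * e20
    · linear_combination v₁ 1 * e21
  obtain ⟨v₁, hv₁, hk₁⟩ := Matrix.exists_mulVec_eq_zero_iff.mpr hd₁
  obtain ⟨v₂, hv₂, hk₂⟩ := Matrix.exists_mulVec_eq_zero_iff.mpr hd₂
  refine ⟨?_, fun w₁ w₂ _ _ h1 h2 => key w₁ w₂ h1 h2⟩
  -- det = 0 via a nonzero kernel vector for the 8×8 matrix
  have hker := key v₁ v₂ hk₁ hk₂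
  -- the equivalence Fin 2 × (Fin 2 × Fin 2) ≃ Fin 8 given by idx8
  have hbij : Function.Bijective idx8 := by
    refine (Fintype.bijective_iff_injective_and_card idx8).mpr ⟨?_, rfl⟩
    intro a b hab
    obtain ⟨⟨a1, _⟩, ⟨a2, _⟩, ⟨a3, _⟩⟩ := a
    obtain ⟨⟨b1, _⟩, ⟨b2, _⟩, ⟨b3, _⟩⟩ := b
    simp only [idx8, Fin.mk.injEq, Prod.mk.injEq] at hab ⊢
    omega
  let e : (Fin 2 × (Fin 2 × Fin 2)) ≃ Fin 8 := Equiv.ofBijective idx8 hbij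
  set u : Fin 8 → ℂ :=
    (fun k : Fin 2 × (Fin 2 × Fin 2) => x ^ (k.1 : ℕ) * (v₁ k.2.1 * v₂ k.2.2)) ∘ e.symm with hu
  apply Matrix.exists_mulVec_eq_zero_iff.mp
  refine ⟨u, ?_, ?_⟩
  · -- u ≠ 0
    obtain ⟨i, hi⟩ := Function.ne_iff.mp hv₁
    obtain ⟨j, hj⟩ := Function.ne_iff.mp hv₂
    simp only [Pi.zero_apply] at hi hj
    intro hu0
    have := congrFun hu0 (e (0, i, j))
    simp [hu] at this
    exact this.elim hi hj
  · funext r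
    have h := congrFun hker (e.symm r)
    simp only [mulVec, dotProduct, Matrix.of_apply, Pi.zero_apply] at h ⊢
    rw [show idx8 (e.symm r) = r from e.apply_symm_apply r] at h
    rw [← Equiv.sum_comp e (fun c => (y • Rone + Rzero) r c * u c)]
    refine Eq.trans (Finset.sum_congr rfl fun k _ => ?_) h
    have h1 : e k = idx8 k := rfl
    have h2 : u (e k) = x ^ (k.1 : ℕ) * (v₁ k.2.1 * v₂ k.2.2) := by
      simp [hu]
    rw [h2, h1]
end

section
/- Let P₁, P₂ : ℂ² → Matrix (Fin n₁) (Fin n₁) ℂ × Matrix (Fin n₂) (Fin n₂) ℂ be bivariate matrix polynomials of degree at most τ₁ in the first variable, and let R(y) be the tensor Dixon resultant obtained by hiding the second variable. If (x*, y*) is a solution of the PMEP (i.e., there exist nonzero v₁, v₂ with P₁(x*,y*)v₁ = 0 and P₂(x*,y*)v₂ = 0), then R(y*) V = 0 where V is the block Vandermonde vector with blocks (x*)^k (v₁ ⊗ v₂) for k = 0, …, τ₁ − 1. -/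
open Matrix Kronecker

lemma kron_mulVec_aux {n₁ n₂ : ℕ} (M : Matrix (Fin n₁) (Fin n₁) ℂ)
    (N : Matrix (Fin n₂) (Fin n₂) ℂ) (a : Fin n₁ → ℂ) (b : Fin n₂ → ℂ) :
    (M ⊗ₖ N) *ᵥ (fun q => a q.1 * b q.2) = fun p => (M *ᵥ a) p.1 * (N *ᵥ b) p.2 := by
  funext p
  simp only [mulVec, dotProduct, kroneckerMap_apply, Fintype.sum_prod_type,
    Finset.sum_mul, Finset.mul_sum]
  rw [Finset.sum_comm]
  apply Finset.sum_congr rfl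
  intro i _
  apply Finset.sum_congr rfl
  intro j _
  ring

/-- d = 2 case of Proposition 4.2: Let P₁, P₂ be bivariate matrix
polynomials whose tensor Dixon function (P₁(s,y)⊗P₂(t,y) − P₁(t,y)⊗P₂(s,y))/(s−t) has
the coefficient expansion Σᵢⱼ sⁱ tʲ Aᵢⱼ(y) (degree ≤ τ₁ − 1 in s and in t).  If
(x*, y*) solves the PMEP with nonzero eigenvectors v₁, v₂, then R(y*)·V = 0, where
R(y) is the unfolded block matrix (block (j,i) = Aᵢⱼ(y)) and V is the block
Vandermonde vector with blocks (x*)^k (v₁ ⊗ v₂), k = 0,…,τ₁−1. -/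
theorem stmt_7 (n₁ n₂ τ₁ : ℕ)
    (P₁ : ℂ → ℂ → Matrix (Fin n₁) (Fin n₁) ℂ)
    (P₂ : ℂ → ℂ → Matrix (Fin n₂) (Fin n₂) ℂ)
    (A : Fin τ₁ → Fin τ₁ → ℂ → Matrix (Fin n₁ × Fin n₂) (Fin n₁ × Fin n₂) ℂ)
    (hA : ∀ s t y : ℂ,
      P₁ s y ⊗ₖ P₂ t y - P₁ t y ⊗ₖ P₂ s y =
        (s - t) • ∑ i : Fin τ₁, ∑ j : Fin τ₁, (s ^ (i : ℕ) * t ^ (j : ℕ)) • A i j y)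
    (x y : ℂ) (v₁ : Fin n₁ → ℂ) (v₂ : Fin n₂ → ℂ)
    (hv₁ : v₁ ≠ 0) (hv₂ : v₂ ≠ 0)
    (h₁ : P₁ x y *ᵥ v₁ = 0) (h₂ : P₂ x y *ᵥ v₂ = 0) :
    (Matrix.of fun r c : Fin τ₁ × (Fin n₁ × Fin n₂) => A c.1 r.1 y r.2 c.2) *ᵥ
      (fun k => x ^ (k.1 : ℕ) * (v₁ k.2.1 * v₂ k.2.2)) = 0 := by
  set w : Fin n₁ × Fin n₂ → ℂ := fun q => v₁ q.1 * v₂ q.2 with hw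
  set c : Fin τ₁ → Fin n₁ × Fin n₂ → ℂ :=
    fun j => ∑ i : Fin τ₁, x ^ (i : ℕ) • (A i j y *ᵥ w) with hc
  -- key identity: for every t, (x - t) • ∑ⱼ tʲ • cⱼ = 0
  have key : ∀ t : ℂ, (x - t) • ∑ j : Fin τ₁, t ^ (j : ℕ) • c j = 0 := by
    intro t
    have h := congrArg (fun M => M *ᵥ w) (hA x t y)
    simp only [sub_mulVec, smul_mulVec] at h
    rw [hw] at h
    rw [kron_mulVec_aux, kron_mulVec_aux] at h
    simp only [h₁, h₂, Pi.zero_apply, mul_zero, zero_mul] at h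
    have h0 : (fun _ : Fin n₁ × Fin n₂ => (0 : ℂ)) - (fun _ => 0) = (0 : Fin n₁ × Fin n₂ → ℂ) := by
      funext p; simp
    rw [h0] at h
    have hS : ((∑ i : Fin τ₁, ∑ j : Fin τ₁, (x ^ (i : ℕ) * t ^ (j : ℕ)) • A i j y) *ᵥ w)
        = ∑ j : Fin τ₁, t ^ (j : ℕ) • c j := by
      rw [hc]
      have hsv : ∀ v : Fin n₁ × Fin n₂ → ℂ, ∀ S : Finset (Fin τ₁),
          ∀ M : Fin τ₁ → Matrix (Fin n₁ × Fin n₂) (Fin n₁ × Fin n₂) ℂ,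
          (∑ i ∈ S, M i) *ᵥ v = ∑ i ∈ S, M i *ᵥ v := by
        intro v S M
        funext p
        simp only [mulVec, dotProduct, Matrix.sum_apply, Finset.sum_apply, Finset.sum_mul]
        rw [Finset.sum_comm]
      rw [hsv]
      have step : ∀ i : Fin τ₁, (∑ j : Fin τ₁, (x ^ (i : ℕ) * t ^ (j : ℕ)) • A i j y) *ᵥ w
          = ∑ j : Fin τ₁, ((x ^ (i : ℕ) * t ^ (j : ℕ)) • A i j y) *ᵥ w :=
        fun i => hsv w Finset.univ _
      simp only [step]
      rw [Finset.sum_comm]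
      apply Finset.sum_congr rfl
      intro j _
      rw [Finset.smul_sum]
      apply Finset.sum_congr rfl
      intro i _
      rw [smul_mulVec, mul_comm, mul_smul]
    rw [hS] at h
    exact h.symm
  -- polynomial argument: c j = 0 for all j
  have hcz : ∀ j : Fin τ₁, c j = 0 := by
    intro j
    funext p
    show c j p = 0
    set q : Polynomial ℂ := ∑ j : Fin τ₁, Polynomial.C (c j p) * Polynomial.X ^ (j : ℕ) with hq
    have hqz : (Polynomial.C x - Polynomial.X) * q = 0 := by
      apply Polynomial.funext
      intro t
      have h := congrFun (key t) p
      simp only [Pi.smul_apply, Finset.sum_apply, smul_eq_mul, Pi.zero_apply] at h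
      simp only [Polynomial.eval_mul, Polynomial.eval_sub, Polynomial.eval_C,
        Polynomial.eval_X, Polynomial.eval_zero, hq, Polynomial.eval_finset_sum,
        Polynomial.eval_pow]
      rw [← h]
      congr 1
      apply Finset.sum_congr rfl
      intro i _
      rw [mul_comm]
    have hXC : Polynomial.C x - Polynomial.X ≠ 0 := by
      intro h
      have h2 : Polynomial.X - Polynomial.C x = 0 := by linear_combination -h
      exact Polynomial.X_sub_C_ne_zero x h2
    have hq0 : q = 0 := (mul_eq_zero.mp hqz).resolve_left hXC
    have hcoeff := congrArg (fun r => Polynomial.coeff r (j : ℕ)) hq0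
    simp only [hq, Polynomial.finset_sum_coeff, Polynomial.coeff_C_mul,
      Polynomial.coeff_X_pow, Polynomial.coeff_zero, mul_ite, mul_one, mul_zero] at hcoeff
    rw [Finset.sum_eq_single j] at hcoeff
    · simpa using hcoeff
    · intro b _ hb
      rw [if_neg]
      intro hjb
      exact hb (Fin.ext hjb.symm)
    · intro hj
      exact absurd (Finset.mem_univ j) hj
  -- conclude
  funext r
  obtain ⟨j, p⟩ := r
  show (∑ q : Fin τ₁ × (Fin n₁ × Fin n₂),
      A q.1 j y p q.2 * (x ^ (q.1 : ℕ) * (v₁ q.2.1 * v₂ q.2.2))) = 0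
  have hz := congrFun (hcz j) p
  simp only [hc, Finset.sum_apply, Pi.smul_apply, smul_eq_mul, Pi.zero_apply,
    mulVec, dotProduct] at hz
  rw [Fintype.sum_prod_type, ← hz]
  apply Finset.sum_congr rfl
  intro i _
  rw [Finset.mul_sum]
  apply Finset.sum_congr rfl
  intro q _
  show A i j y p q * (x ^ (i : ℕ) * (v₁ q.1 * v₂ q.2)) = x ^ (i : ℕ) * (A i j y p q * w q)
  rw [hw]
  ring
end
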